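/- Let ν ∈ [0, 1/2], η ∈ (0,1), and let σ, t ∈ ℝ. Suppose M ≥ 1, M' ∈ (M, 2M], and |∑_{M < m ≤ M'} m^{-(1+it)}| > M^{-ν}. Then there exists a real y ∈ (M, M'] such that |∑_{M < m ≤ y} m^{-(1-ν-η+it)}| > M^η / 4. -/

import Mathlib

/-!
Factor `m ^ (-(1 + it)) = m ^ (-(ν + η)) * m ^ (-(1 - ν - η + it))`. If every partial sum of the
second Dirichlet polynomial over `(M, y]` were at most `M ^ η / 4`, Abel summation against the
decreasing weights `m ^ (-(ν + η)) ≤ M ^ (-(ν + η))` would bound the sum over `(M, M']` by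
`M ^ (-ν) / 4`.
-/

open Finset Complex

section AbelInequality

variable {E : Type*} [NormedAddCommGroup E] [NormedSpace ℝ E]
  {w : ℕ → ℝ} {f : ℕ → E} {a b : ℕ} {B : ℝ}

theorem norm_sum_Ioc_smul_sub_smul_sum_le (hab : a < b)
    (hw : AntitoneOn w (Set.Icc (a + 1) b))
    (hf : ∀ k ∈ Ioc a b, ‖∑ m ∈ Ioc a k, f m‖ ≤ B) :
    ‖∑ m ∈ Ioc a b, w m • f m - w b • ∑ m ∈ Ioc a b, f m‖ ≤ (w (a + 1) - w b) * B := by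
  induction b, hab using Nat.le_induction with
  | base => simp
  | succ b hab ih =>
    have hw' : AntitoneOn w (Set.Icc (a + 1) b) :=
      hw.mono (Set.Icc_subset_Icc_right b.le_succ)
    have hf' : ∀ k ∈ Ioc a b, ‖∑ m ∈ Ioc a k, f m‖ ≤ B := fun k hk ↦
      hf k (Ioc_subset_Ioc_right b.le_succ hk)
    have hstep : w (b + 1) ≤ w b :=
      hw ⟨hab, b.le_succ⟩ ⟨by omega, le_rfl⟩ b.le_succ
    have hsplit : ∑ m ∈ Ioc a (b + 1), w m • f m - w (b + 1) • ∑ m ∈ Ioc a (b + 1), f m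
        = (∑ m ∈ Ioc a b, w m • f m - w b • ∑ m ∈ Ioc a b, f m)
          + (w b - w (b + 1)) • ∑ m ∈ Ioc a b, f m := by
      rw [sum_Ioc_succ_top (by omega), sum_Ioc_succ_top (by omega), smul_add, sub_smul]
      abel
    calc ‖_‖ = ‖_‖ := by rw [hsplit]
      _ ≤ (w (a + 1) - w b) * B + (w b - w (b + 1)) * B := by
        refine (norm_add_le _ _).trans (add_le_add (ih hw' hf') ?_)
        rw [norm_smul, Real.norm_of_nonneg (sub_nonneg.2 hstep)]
        exact mul_le_mul_of_nonneg_left (hf' b (right_mem_Ioc.2 hab)) (sub_nonneg.2 hstep)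
      _ = (w (a + 1) - w (b + 1)) * B := by ring

/-- Abel's inequality. -/
theorem norm_sum_Ioc_smul_le_of_antitoneOn (hab : a < b)
    (hw : AntitoneOn w (Set.Icc (a + 1) b)) (hwb : 0 ≤ w b)
    (hf : ∀ k ∈ Ioc a b, ‖∑ m ∈ Ioc a k, f m‖ ≤ B) :
    ‖∑ m ∈ Ioc a b, w m • f m‖ ≤ w (a + 1) * B := by
  have htail : ‖w b • ∑ m ∈ Ioc a b, f m‖ ≤ w b * B := by
    rw [norm_smul, Real.norm_of_nonneg hwb]
    exact mul_le_mul_of_nonneg_left (hf b (right_mem_Ioc.2 hab)) hwb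
  calc ‖∑ m ∈ Ioc a b, w m • f m‖
      ≤ ‖∑ m ∈ Ioc a b, w m • f m - w b • ∑ m ∈ Ioc a b, f m‖
        + ‖w b • ∑ m ∈ Ioc a b, f m‖ := norm_le_norm_sub_add _ _
    _ ≤ (w (a + 1) - w b) * B + w b * B :=
      add_le_add (norm_sum_Ioc_smul_sub_smul_sum_le hab hw hf) htail
    _ = w (a + 1) * B := by ring

end AbelInequality

theorem natCast_cpow_eq_rpow_smul_cpow_sub {m : ℕ} (hm : m ≠ 0) (s : ℂ) (δ : ℝ) :
    (m : ℂ) ^ s = ((m : ℝ) ^ δ) • (m : ℂ) ^ (s - δ) := by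
  rw [real_smul, ofReal_cpow m.cast_nonneg, ofReal_natCast,
    ← cpow_add _ _ (Nat.cast_ne_zero.2 hm), add_sub_cancel]

theorem antitoneOn_natCast_rpow_neg {c : ℝ} (hc : 0 ≤ c) :
    AntitoneOn (fun n : ℕ ↦ (n : ℝ) ^ (-c)) (Set.Ici 1) := fun m hm n _ hmn ↦
  Real.rpow_le_rpow_of_nonpos (by exact_mod_cast hm) (by exact_mod_cast hmn) (by linarith)

theorem norm_sum_Ioc_natCast_cpow_sub_le {a b : ℕ} {s : ℂ} {c B : ℝ} (hab : a < b) (hc : 0 ≤ c)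
    (hf : ∀ k ∈ Ioc a b, ‖∑ m ∈ Ioc a k, (m : ℂ) ^ s‖ ≤ B) :
    ‖∑ m ∈ Ioc a b, (m : ℂ) ^ (s - c)‖ ≤ ((a + 1 : ℕ) : ℝ) ^ (-c) * B := by
  have hsplit : ∑ m ∈ Ioc a b, (m : ℂ) ^ (s - c)
      = ∑ m ∈ Ioc a b, ((m : ℝ) ^ (-c)) • (m : ℂ) ^ s :=
    sum_congr rfl fun m hm ↦ by
      rw [natCast_cpow_eq_rpow_smul_cpow_sub (by grind) _ (-c)]
      push_cast
      ring_nf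
  rw [hsplit]
  exact norm_sum_Ioc_smul_le_of_antitoneOn hab
    ((antitoneOn_natCast_rpow_neg hc).mono fun n hn ↦ Set.mem_Ici.2 (by grind))
    (by positivity) hf

theorem stmt_4_general (ν η t M M' : ℝ) (hν : ν ∈ Set.Icc 0 (1/2)) (hη : η ∈ Set.Ioo 0 1)
    (hM : 1 ≤ M) (hM'1 : M < M')
    (hbig : M ^ (-ν) <
      ‖∑ m ∈ Finset.Ioc ⌊M⌋₊ ⌊M'⌋₊, (m : ℂ) ^ (-((1 : ℂ) + t * Complex.I))‖) :
    ∃ y ∈ Set.Ioc M M',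
      M ^ η / 4 <
        ‖∑ m ∈ Finset.Ioc ⌊M⌋₊ ⌊y⌋₊,
            (m : ℂ) ^ (-(((1 - ν - η : ℝ) : ℂ) + t * Complex.I))‖ := by
  by_contra! hsmall
  have hM0 : 0 < M := one_pos.trans_le hM
  have hνη : 0 ≤ ν + η := by linarith [hν.1, hη.1]
  have hab : ⌊M⌋₊ < ⌊M'⌋₊ := by
    by_contra! hba
    rw [Ioc_eq_empty_of_le hba, sum_empty, norm_zero] at hbig
    exact hbig.not_ge (by positivity)
  have hpartial : ∀ k ∈ Ioc ⌊M⌋₊ ⌊M'⌋₊, ‖∑ m ∈ Ioc ⌊M⌋₊ k,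
      (m : ℂ) ^ (-(((1 - ν - η : ℝ) : ℂ) + t * Complex.I))‖ ≤ M ^ η / 4 := fun k hk ↦ by
    simpa using hsmall k ⟨(Nat.floor_lt hM0.le).1 (mem_Ioc.1 hk).1,
      (Nat.le_floor_iff (hM0.trans hM'1).le).1 (mem_Ioc.1 hk).2⟩
  have hexp : -((1 : ℂ) + t * Complex.I)
      = -(((1 - ν - η : ℝ) : ℂ) + t * Complex.I) - ((ν + η : ℝ) : ℂ) := by
    push_cast
    ring
  have hfirst : ((⌊M⌋₊ + 1 : ℕ) : ℝ) ^ (-(ν + η)) ≤ M ^ (-(ν + η)) :=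
    Real.rpow_le_rpow_of_nonpos hM0 (by exact_mod_cast (Nat.lt_floor_add_one M).le) (by linarith)
  have hcontra : M ^ (-ν) < M ^ (-ν) / 4 := calc
    M ^ (-ν) < _ := hbig
    _ ≤ ((⌊M⌋₊ + 1 : ℕ) : ℝ) ^ (-(ν + η)) * (M ^ η / 4) :=
      hexp ▸ norm_sum_Ioc_natCast_cpow_sub_le hab hνη hpartial
    _ ≤ M ^ (-(ν + η)) * (M ^ η / 4) := by gcongr
    _ = M ^ (-ν) / 4 := by
      rw [mul_div_assoc', ← Real.rpow_add hM0]
      ring_nf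
  linarith [Real.rpow_pos_of_pos hM0 (-ν)]

/-- Large value transfer from the line Re s = 1 to the line Re s = 1 - ν - η. -/
theorem stmt_4 (ν η t M M' : ℝ) (hν : ν ∈ Set.Icc 0 (1/2)) (hη : η ∈ Set.Ioo 0 1)
    (hM : 1 ≤ M) (hM'1 : M < M') (hM'2 : M' ≤ 2 * M)
    (hbig : M ^ (-ν) <
      ‖∑ m ∈ Finset.Ioc ⌊M⌋₊ ⌊M'⌋₊, (m : ℂ) ^ (-((1 : ℂ) + t * Complex.I))‖) :
    ∃ y ∈ Set.Ioc M M',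
      M ^ η / 4 <
        ‖∑ m ∈ Finset.Ioc ⌊M⌋₊ ⌊y⌋₊,
            (m : ℂ) ^ (-(((1 - ν - η : ℝ) : ℂ) + t * Complex.I))‖ :=
  stmt_4_general ν η t M M' hν hη hM hM'1 hbig
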